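/- arXiv:1610.01477 — 9 statements merged into one kernel-verified Lean document; each statement's English description precedes it below -/
import Mathlib

section
/- Let (g,[-,-],α) be a regular hom-Lie algebra over a commutative ring R, i.e. α is an R-module automorphism of g with α([x,y]) = [α(x),α(y)]. For any integer s, define ad_s: g → End_R(g) by ad_s(x)(y) = [α^s(x), y]. Then the pair (ad_s, α) is a representation of (g,[-,-],α) on g; that is, ad_s(α(x))∘α = α∘ad_s(x) and ad_s([x,y])∘α = ad_s(α(x))∘ad_s(y) − ad_s(α(y))∘ad_s(x) for all x,y ∈ g. -/
/-! Since `α ^ s` commutes with `α` and, like `α`, preserves the bracket, substituting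
`a = (α ^ s) x`, `b = (α ^ s) y` reduces both identities to the case `s = 0`. There the first
is multiplicativity of `α`, and the second is the hom-Jacobi identity for `a, b, v`, rearranged
by skew-symmetry. -/

section HomLie

variable {g : Type*}

def bracketPreservingSubgroup (R : Type*) [Semiring R] [AddCommMonoid g] [Module R g]
    (br : g → g → g) : Subgroup (g ≃ₗ[R] g) where
  carrier := {f | ∀ x y, f (br x y) = br (f x) (f y)}
  one_mem' _ _ := rfl
  mul_mem' {f h} hf hh x y := (congrArg f (hh x y)).trans (hf _ _)
  inv_mem' {f} hf x y := by
    apply f.injective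
    rw [hf]
    simp only [LinearEquiv.coe_inv, LinearEquiv.apply_symm_apply]

theorem zpow_apply_bracket {R : Type*} [Semiring R] [AddCommMonoid g] [Module R g]
    {br : g → g → g} {α : g ≃ₗ[R] g} (α_br : ∀ x y, α (br x y) = br (α x) (α y)) (s : ℤ)
    (x y : g) : (α ^ s) (br x y) = br ((α ^ s) x) ((α ^ s) y) :=
  Subgroup.zpow_mem (bracketPreservingSubgroup R br) α_br s x y

theorem zpow_apply_apply_self {R : Type*} [Semiring R] [AddCommMonoid g] [Module R g]
    (α : g ≃ₗ[R] g) (s : ℤ) (x : g) : (α ^ s) (α x) = α ((α ^ s) x) := by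
  rw [← LinearEquiv.mul_apply, ← LinearEquiv.mul_apply, (Commute.self_zpow α s).eq]

variable [AddCommGroup g] {br : g → g → g}

theorem bracket_neg_right (br_add_left : ∀ x y z : g, br (x + y) z = br x z + br y z)
    (br_skew : ∀ x y : g, br x y = -br y x) (x y : g) : br x (-y) = -br x y := by
  rw [br_skew, br_skew x y, neg_inj]
  exact map_neg (AddMonoidHom.mk' (br · x) (br_add_left · · x)) y

theorem bracket_bracket_apply_eq_sub {α : g → g}
    (br_add_left : ∀ x y z : g, br (x + y) z = br x z + br y z)
    (br_skew : ∀ x y : g, br x y = -br y x)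
    (hom_jacobi : ∀ x y z : g,
      br (α x) (br y z) + br (α y) (br z x) + br (α z) (br x y) = 0)
    (a b v : g) : br (br a b) (α v) = br (α a) (br b v) - br (α b) (br a v) := by
  have hv : br (α v) (br a b) = -(br (α a) (br b v) + br (α b) (br v a)) :=
    eq_neg_of_add_eq_zero_right (hom_jacobi a b v)
  rw [br_skew (br a b), hv, neg_neg, br_skew v a,
    bracket_neg_right br_add_left br_skew, sub_eq_add_neg]

end HomLie

theorem adjoint_rep_of_regular_homLie_general (R : Type*) (g : Type*) [CommRing R]
    [AddCommGroup g] [Module R g]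
    (br : g → g → g)
    (br_add_left : ∀ x y z : g, br (x + y) z = br x z + br y z)
    (br_skew : ∀ x y : g, br x y = - br y x)
    (α : g ≃ₗ[R] g)
    (α_br : ∀ x y : g, α (br x y) = br (α x) (α y))
    (hom_jacobi : ∀ x y z : g,
      br (α x) (br y z) + br (α y) (br z x) + br (α z) (br x y) = 0)
    (s : ℤ) :
    (∀ x v : g, br ((α ^ s) (α x)) (α v) = α (br ((α ^ s) x) v)) ∧
    (∀ x y v : g,
      br ((α ^ s) (br x y)) (α v)
        = br ((α ^ s) (α x)) (br ((α ^ s) y) v) - br ((α ^ s) (α y)) (br ((α ^ s) x) v)) := by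
  refine ⟨fun x v => ?_, fun x y v => ?_⟩
  · rw [zpow_apply_apply_self, α_br]
  · rw [zpow_apply_bracket α_br, zpow_apply_apply_self, zpow_apply_apply_self]
    exact bracket_bracket_apply_eq_sub br_add_left br_skew hom_jacobi _ _ v

/-- For a regular hom-Lie algebra `(g, br, α)` (with `α` an `R`-module
automorphism) and any integer `s`, the pair `(ad_s, α)` with `ad_s x y = br ((α^s) x) y`
is a representation of `(g, br, α)` on `g`. -/
theorem adjoint_rep_of_regular_homLie (R : Type*) (g : Type*) [CommRing R]
    [AddCommGroup g] [Module R g]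
    (br : g → g → g)
    (br_add_left : ∀ x y z : g, br (x + y) z = br x z + br y z)
    (br_smul_left : ∀ (r : R) (x y : g), br (r • x) y = r • br x y)
    (br_skew : ∀ x y : g, br x y = - br y x)
    (α : g ≃ₗ[R] g)
    (α_br : ∀ x y : g, α (br x y) = br (α x) (α y))
    (hom_jacobi : ∀ x y z : g,
      br (α x) (br y z) + br (α y) (br z x) + br (α z) (br x y) = 0)
    (s : ℤ) :
    (∀ x v : g, br ((α ^ s) (α x)) (α v) = α (br ((α ^ s) x) v)) ∧
    (∀ x y v : g,
      br ((α ^ s) (br x y)) (α v)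
        = br ((α ^ s) (α x)) (br ((α ^ s) y) v) - br ((α ^ s) (α y)) (br ((α ^ s) x) v)) :=
  adjoint_rep_of_regular_homLie_general R g br br_add_left br_skew α α_br hom_jacobi s
end

section
/- Let (A,μ,[-,-]) be a Poisson algebra over a commutative ring R and let φ: A → A be a Poisson algebra automorphism (an automorphism of the commutative algebra (A,μ) with φ([x,y]) = [φ(x),φ(y)]). Then the quadruple (A, μ, φ∘[-,-], φ) is a purely hom-Poisson algebra; in particular, writing {x,y} := φ([x,y]), the hom-Jacobi identity {φ(x),{y,z}} + {φ(y),{z,x}} + {φ(z),{x,y}} = 0 and the hom-Leibniz identity {x, yz} = φ(y){x,z} + φ(z){x,y} hold for all x,y,z ∈ A. -/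
/-- Given a Poisson algebra `(A, *, br)` over `R` and a Poisson algebra
automorphism `φ`, the quadruple `(A, *, φ∘br, φ)` is a purely hom-Poisson algebra; writing
`{x,y} = φ (br x y)`, the bracket is skew-symmetric, `φ` is multiplicative for it, and the
hom-Jacobi and hom-Leibniz identities hold. -/
theorem purely_homPoisson_of_poisson_comp (R A : Type*) [CommRing R] [CommRing A] [Algebra R A]
    (br : A → A → A)
    (br_add_left : ∀ x y z : A, br (x + y) z = br x z + br y z)
    (br_smul_left : ∀ (r : R) (x y : A), br (r • x) y = r • br x y)
    (br_skew : ∀ x y : A, br x y = - br y x)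
    (br_jacobi : ∀ x y z : A, br (br x y) z + br (br y z) x + br (br z x) y = 0)
    (br_leibniz : ∀ x y z : A, br x (y * z) = y * br x z + z * br x y)
    (φ : A ≃ₐ[R] A)
    (φ_br : ∀ x y : A, φ (br x y) = br (φ x) (φ y)) :
    (∀ x y : A, φ (br x y) = - φ (br y x)) ∧
    (∀ x y : A, φ (φ (br x y)) = φ (br (φ x) (φ y))) ∧
    (∀ x y z : A,
      φ (br (φ x) (φ (br y z))) + φ (br (φ y) (φ (br z x))) + φ (br (φ z) (φ (br x y))) = 0) ∧
    (∀ x y z : A, φ (br x (y * z)) = φ y * φ (br x z) + φ z * φ (br x y)) := by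
  refine ⟨fun x y => by rw [br_skew x y, map_neg], fun x y => by rw [φ_br], ?_, ?_⟩
  · intro x y z
    have h : ∀ a b : A, φ (br (φ a) (φ b)) = φ (φ (br a b)) := fun a b => by rw [← φ_br]
    rw [h x (br y z), h y (br z x), h z (br x y), ← map_add, ← map_add, ← map_add, ← map_add]
    have key : br x (br y z) + br y (br z x) + br z (br x y) = 0 := by
      rw [br_skew x (br y z), br_skew y (br z x), br_skew z (br x y)]
      linear_combination - br_jacobi y z x
    rw [key, map_zero, map_zero]
  · intro x y z
    rw [br_leibniz, map_add, map_mul, map_mul]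
end

section
/- Let A be an associative commutative R-algebra and φ: A → A an algebra automorphism. With [D₁,D₂]_φ = φ∘D₁∘φ⁻¹∘D₂∘φ⁻¹ − φ∘D₂∘φ⁻¹∘D₁∘φ⁻¹ and α_φ(D) = φ∘D∘φ⁻¹ on the A-module Der_φ(A) of φ-derivations (with A acting by (a·D)(b) = a·D(b)), the tuple (A, Der_φ(A), [-,-]_φ, φ, α_φ, α_φ) is a hom-Lie-Rinehart algebra over (A,φ) with anchor map ρ = α_φ; in particular α_φ(a·D) = φ(a)·α_φ(D) and [D₁, a·D₂]_φ = φ(a)·[D₁,D₂]_φ + α_φ(D₁)(a)·α_φ(D₂) for all a ∈ A and D, D₁, D₂ ∈ Der_φ(A). -/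
/-- A `φ`-derivation of `A` into itself. -/
def IsPhiDerivation (R A : Type*) [CommRing R] [CommRing A] [Algebra R A]
    (φ : A → A) (D : A → A) : Prop :=
  (∀ a b : A, D (a + b) = D a + D b) ∧
  (∀ (r : R) (a : A), D (r • a) = r • D a) ∧
  (∀ a b : A, D (a * b) = φ a * D b + φ b * D a)

section Aux

variable {R A : Type*} [CommRing R] [CommRing A] [Algebra R A] {φ D : A → A}

theorem phiDeriv_zero (h : IsPhiDerivation R A φ D) : D 0 = 0 := by
  have := h.1 0 0
  simp only [add_zero] at this
  linear_combination -this

theorem phiDeriv_sub (h : IsPhiDerivation R A φ D) (x y : A) :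
    D (x - y) = D x - D y := by
  have hneg : D (-y) = - D y := by
    have := h.1 y (-y)
    simp only [add_neg_cancel, phiDeriv_zero h] at this
    linear_combination -this
  rw [sub_eq_add_neg, h.1, hneg, sub_eq_add_neg]

end Aux

/-- The twisted bracket `[D₁,D₂]_φ = φ∘D₁∘φ⁻¹∘D₂∘φ⁻¹ − φ∘D₂∘φ⁻¹∘D₁∘φ⁻¹`. -/
def phiBracket {R A : Type*} [CommRing R] [CommRing A] [Algebra R A]
    (φ : A ≃ₐ[R] A) (D₁ D₂ : A → A) : A → A :=
  fun a => φ (D₁ (φ.symm (D₂ (φ.symm a)))) - φ (D₂ (φ.symm (D₁ (φ.symm a))))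

/-- The twisting map `α_φ(D) = φ∘D∘φ⁻¹`. -/
def phiAlpha {R A : Type*} [CommRing R] [CommRing A] [Algebra R A]
    (φ : A ≃ₐ[R] A) (D : A → A) : A → A :=
  fun a => φ (D (φ.symm a))

/-- For an algebra automorphism `φ : A → A`, the tuple
`(A, Der_φ(A), [-,-]_φ, φ, α_φ, α_φ)` (with `A` acting by `(a·D)(b) = a * D b` and anchor
`ρ = α_φ`) is a hom-Lie-Rinehart algebra over `(A,φ)`: the hom-Lie axioms hold, and in
particular `α_φ(a·D) = φ(a)·α_φ(D)`, `ρ(a·D) = φ(a)·ρ(D)`, `(ρ,φ)` is a representation on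
`A`, and `[D₁, a·D₂]_φ = φ(a)·[D₁,D₂]_φ + α_φ(D₁)(a)·α_φ(D₂)`. -/
theorem phiDerivations_homLieRinehart (R A : Type*) [CommRing R] [CommRing A] [Algebra R A]
    (φ : A ≃ₐ[R] A) :
    -- hom-Lie algebra structure on φ-derivations
    (∀ D₁ D₂ : A → A, IsPhiDerivation R A φ D₁ → IsPhiDerivation R A φ D₂ →
      IsPhiDerivation R A φ (phiBracket φ D₁ D₂)) ∧
    (∀ D : A → A, IsPhiDerivation R A φ D → IsPhiDerivation R A φ (phiAlpha φ D)) ∧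
    (∀ D₁ D₂ : A → A, phiBracket φ D₁ D₂ = - phiBracket φ D₂ D₁) ∧
    (∀ D₁ D₂ : A → A, phiAlpha φ (phiBracket φ D₁ D₂)
        = phiBracket φ (phiAlpha φ D₁) (phiAlpha φ D₂)) ∧
    (∀ D₁ D₂ D₃ : A → A, IsPhiDerivation R A φ D₁ → IsPhiDerivation R A φ D₂ →
      IsPhiDerivation R A φ D₃ →
      phiBracket φ (phiAlpha φ D₁) (phiBracket φ D₂ D₃)
        + phiBracket φ (phiAlpha φ D₂) (phiBracket φ D₃ D₁)
        + phiBracket φ (phiAlpha φ D₃) (phiBracket φ D₁ D₂) = 0) ∧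
    -- α_φ(a·D) = φ(a)·α_φ(D)   (this also says ρ(a·D) = φ(a)·ρ(D), since ρ = α_φ)
    (∀ (a : A) (D : A → A), IsPhiDerivation R A φ D →
      phiAlpha φ (fun b => a * D b) = fun b => φ a * phiAlpha φ D b) ∧
    -- (ρ, φ) is a representation of the hom-Lie algebra on A, where ρ = α_φ
    (∀ (D : A → A), IsPhiDerivation R A φ D →
      ∀ a : A, phiAlpha φ (phiAlpha φ D) (φ a) = φ (phiAlpha φ D a)) ∧
    (∀ D₁ D₂ : A → A, IsPhiDerivation R A φ D₁ → IsPhiDerivation R A φ D₂ →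
      ∀ a : A, phiAlpha φ (phiBracket φ D₁ D₂) (φ a)
        = phiAlpha φ (phiAlpha φ D₁) (phiAlpha φ D₂ a)
          - phiAlpha φ (phiAlpha φ D₂) (phiAlpha φ D₁ a)) ∧
    -- hom-Leibniz rule: [D₁, a·D₂]_φ = φ(a)·[D₁,D₂]_φ + α_φ(D₁)(a)·α_φ(D₂)
    (∀ (a : A) (D₁ D₂ : A → A), IsPhiDerivation R A φ D₁ → IsPhiDerivation R A φ D₂ →
      phiBracket φ D₁ (fun b => a * D₂ b)
        = fun b => φ a * phiBracket φ D₁ D₂ b + phiAlpha φ D₁ a * phiAlpha φ D₂ b) := by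
  
  refine ⟨?_, ?_, ?_, ?_, ?_, ?_, ?_, ?_, ?_⟩
  · intro D₁ D₂ h₁ h₂
    refine ⟨fun a b => ?_, fun r a => ?_, fun a b => ?_⟩
    · simp only [phiBracket, map_add, h₁.1, h₂.1]
      ring
    · simp only [phiBracket, map_smul, h₁.2.1, h₂.2.1, smul_sub]
    · simp only [phiBracket, map_mul, h₂.2.2, map_add, h₁.1, h₁.2.2, h₂.1,
        AlgEquiv.apply_symm_apply]
      ring
  · intro D h
    refine ⟨fun a b => ?_, fun r a => ?_, fun a b => ?_⟩
    · simp only [phiAlpha, map_add, h.1]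
    · simp only [phiAlpha, map_smul, h.2.1]
    · simp only [phiAlpha, map_mul, h.2.2, map_add, AlgEquiv.apply_symm_apply]
  · intro D₁ D₂
    funext a
    simp only [phiBracket, Pi.neg_apply]
    ring
  · intro D₁ D₂
    funext a
    simp only [phiBracket, phiAlpha, map_sub, AlgEquiv.symm_apply_apply]
  · intro D₁ D₂ D₃ h₁ h₂ h₃
    funext a
    simp only [phiBracket, phiAlpha, Pi.add_apply, Pi.zero_apply, map_sub,
      AlgEquiv.symm_apply_apply, phiDeriv_sub h₁, phiDeriv_sub h₂, phiDeriv_sub h₃]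
    abel
  · intro a D h
    funext b
    simp only [phiAlpha, map_mul, AlgEquiv.apply_symm_apply]
  · intro D h a
    simp only [phiAlpha, AlgEquiv.symm_apply_apply]
  · intro D₁ D₂ h₁ h₂ a
    simp only [phiAlpha, phiBracket, map_sub, AlgEquiv.symm_apply_apply]
  · intro a D₁ D₂ h₁ h₂
    funext b
    simp only [phiBracket, phiAlpha, map_mul, h₁.2.2, map_add, AlgEquiv.apply_symm_apply]
    ring
end

section
/- Let L be a Lie-Rinehart algebra over an associative commutative R-algebra A with anchor ρ: L → Der(A), and let (φ,α) be an endomorphism of L in the category of Lie-Rinehart algebras (φ: A → A an algebra homomorphism, α: L → L an R-linear map with α(a·x) = φ(a)·α(x), α([x,y]) = [α(x),α(y)], and φ(ρ(x)(a)) = ρ(α(x))(φ(a))). Then (A, L, [-,-]_α, φ, α, ρ_φ), where [x,y]_α := α([x,y]) and ρ_φ(x)(a) := φ(ρ(x)(a)), is a hom-Lie-Rinehart algebra over (A,φ). -/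
/-- A hom-Lie-Rinehart algebra structure over `(A, φ)` on an `A`-module `L`:
`(L, br, α)` is a hom-Lie algebra over `R`, `α(a•x) = φ(a)•α(x)`, the anchor
`ρ : L → Der_φ(A)` is `R`-linear with `ρ(a•x) = φ(a)·ρ(x)`, `(ρ, φ)` is a representation
of `(L, br, α)` on `A`, and the hom-Leibniz rule `br x (a•y) = φ(a)•br x y + ρ x a • α y`
holds. -/
structure IsHomLieRinehart (R A L : Type*) [CommRing R] [CommRing A] [Algebra R A]
    [AddCommGroup L] [Module R L] [Module A L]
    (br : L → L → L) (φ : A → A) (α : L → L) (ρ : L → A → A) : Prop where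
  br_add_left : ∀ x y z : L, br (x + y) z = br x z + br y z
  br_smul_left : ∀ (r : R) (x y : L), br (r • x) y = r • br x y
  br_skew : ∀ x y : L, br x y = - br y x
  α_add : ∀ x y : L, α (x + y) = α x + α y
  α_smul : ∀ (r : R) (x : L), α (r • x) = r • α x
  α_br : ∀ x y : L, α (br x y) = br (α x) (α y)
  hom_jacobi : ∀ x y z : L,
    br (α x) (br y z) + br (α y) (br z x) + br (α z) (br x y) = 0
  α_smulA : ∀ (a : A) (x : L), α (a • x) = φ a • α x
  ρ_add_left : ∀ (x y : L) (a : A), ρ (x + y) a = ρ x a + ρ y a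
  ρ_smul_left : ∀ (r : R) (x : L) (a : A), ρ (r • x) a = r • ρ x a
  ρ_add_right : ∀ (x : L) (a b : A), ρ x (a + b) = ρ x a + ρ x b
  ρ_smul_right : ∀ (x : L) (r : R) (a : A), ρ x (r • a) = r • ρ x a
  ρ_der : ∀ (x : L) (a b : A), ρ x (a * b) = φ a * ρ x b + φ b * ρ x a
  ρ_smulA : ∀ (a : A) (x : L) (b : A), ρ (a • x) b = φ a * ρ x b
  rep_α : ∀ (x : L) (a : A), ρ (α x) (φ a) = φ (ρ x a)
  rep_br : ∀ (x y : L) (a : A),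
    ρ (br x y) (φ a) = ρ (α x) (ρ y a) - ρ (α y) (ρ x a)
  hom_leibniz : ∀ (x y : L) (a : A), br x (a • y) = φ a • br x y + ρ x a • α y

/-- Given a Lie-Rinehart algebra `L` over `A` with anchor `ρ`, and an
endomorphism `(φ, α)` of `L` in the category of Lie-Rinehart algebras, the tuple
`(A, L, [-,-]_α, φ, α, ρ_φ)` with `[x,y]_α = α [x,y]` and `ρ_φ(x)(a) = φ (ρ x a)` is a
hom-Lie-Rinehart algebra over `(A, φ)`. -/
theorem homLieRinehart_by_composition (R A L : Type*) [CommRing R] [CommRing A] [Algebra R A]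
    [AddCommGroup L] [Module R L] [Module A L]
    (br : L → L → L) (ρ : L → A → A)
    -- Lie-Rinehart algebra axioms for (A, L, br, ρ)
    (br_add_left : ∀ x y z : L, br (x + y) z = br x z + br y z)
    (br_smul_left : ∀ (r : R) (x y : L), br (r • x) y = r • br x y)
    (br_skew : ∀ x y : L, br x y = - br y x)
    (br_jacobi : ∀ x y z : L, br (br x y) z + br (br y z) x + br (br z x) y = 0)
    (ρ_add_left : ∀ (x y : L) (a : A), ρ (x + y) a = ρ x a + ρ y a)
    (ρ_smul_left : ∀ (r : R) (x : L) (a : A), ρ (r • x) a = r • ρ x a)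
    (ρ_add_right : ∀ (x : L) (a b : A), ρ x (a + b) = ρ x a + ρ x b)
    (ρ_smul_right : ∀ (x : L) (r : R) (a : A), ρ x (r • a) = r • ρ x a)
    (ρ_der : ∀ (x : L) (a b : A), ρ x (a * b) = a * ρ x b + b * ρ x a)
    (ρ_smulA : ∀ (a : A) (x : L) (b : A), ρ (a • x) b = a * ρ x b)
    (ρ_lieHom : ∀ (x y : L) (a : A), ρ (br x y) a = ρ x (ρ y a) - ρ y (ρ x a))
    (lr_leibniz : ∀ (x y : L) (a : A), br x (a • y) = a • br x y + ρ x a • y)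
    -- the Lie-Rinehart algebra endomorphism (φ, α)
    (φ : A →ₐ[R] A) (α : L → L)
    (α_add : ∀ x y : L, α (x + y) = α x + α y)
    (α_smul : ∀ (r : R) (x : L), α (r • x) = r • α x)
    (α_smulA : ∀ (a : A) (x : L), α (a • x) = φ a • α x)
    (α_br : ∀ x y : L, α (br x y) = br (α x) (α y))
    (φ_ρ : ∀ (x : L) (a : A), φ (ρ x a) = ρ (α x) (φ a)) :
    IsHomLieRinehart R A L (fun x y => α (br x y)) φ α (fun x a => φ (ρ x a)) := by
  have α_neg : ∀ z : L, α (-z) = - α z := by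
    intro z
    rw [← neg_one_smul R z, α_smul, neg_one_smul]
  constructor
  · intro x y z; rw [br_add_left, α_add]
  · intro r x y; rw [br_smul_left, α_smul]
  · intro x y; rw [br_skew, α_neg]
  · exact α_add
  · exact α_smul
  · intro x y; rw [α_br]
  · intro x y z
    have h1 : α (br (α x) (br (α y) (α z))) = α (α (br x (br y z))) := by
      rw [α_br x (br y z), α_br y z]
    have h2 : α (br (α y) (br (α z) (α x))) = α (α (br y (br z x))) := by
      rw [α_br y (br z x), α_br z x]
    have h3 : α (br (α z) (br (α x) (α y))) = α (α (br z (br x y))) := by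
      rw [α_br z (br x y), α_br x y]
    rw [α_br y z, α_br z x, α_br x y, h1, h2, h3, ← α_add, ← α_add, ← α_add, ← α_add]
    have key : br x (br y z) + br y (br z x) + br z (br x y) = 0 := by
      have := br_jacobi y z x
      rw [br_skew (br y z) x, br_skew (br z x) y, br_skew (br x y) z] at this
      linear_combination (norm := abel) -this
    rw [key]
    have a0 : α (0 : L) = 0 := by
      have := α_smul 0 0
      simpa using this
    rw [a0, a0]
  · exact α_smulA
  · intro x y a; rw [ρ_add_left, map_add]
  · intro r x a; rw [ρ_smul_left, map_smul]
  · intro x a b; rw [ρ_add_right, map_add]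
  · intro x r a; rw [ρ_smul_right, map_smul]
  · intro x a b; rw [ρ_der, map_add, map_mul, map_mul]
  · intro a x b; rw [ρ_smulA, map_mul]
  · intro x a; rw [← φ_ρ]
  · intro x y a
    rw [← φ_ρ, ρ_lieHom, map_sub, map_sub, ← φ_ρ, ← φ_ρ]
  · intro x y a
    rw [lr_leibniz, α_add, α_smulA, α_smulA]
end

section
/- Let (L,[-,-],α) be a hom-Lie algebra over R, A an associative commutative R-algebra with an algebra homomorphism φ: A → A, and ρ: L → Der_φ(A) an R-linear map such that (ρ,φ) is a representation of (L,[-,-],α) on A. Then g = A ⊗_R L carries a hom-Lie-Rinehart algebra structure over (A,φ) (the transformation hom-Lie-Rinehart algebra), where the bracket is [a⊗x, b⊗y]_g = φ(ab)⊗[x,y] + φ(a)ρ(x)(b)⊗α(y) − φ(b)ρ(y)(a)⊗α(x), the endomorphism is α̃(a⊗x) = φ(a)⊗α(x), and the anchor is ρ̃(a⊗x)(b) = φ(a)ρ(x)(b), for a,b ∈ A, x,y ∈ L. -/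
/-! The twist and the anchor are `φ ⊗ α` and the lift of `(a, x) ↦ φ(a) • ρ(x)`, and the bracket is
`P u v + T u v - T v u`, where `P (a ⊗ x) (b ⊗ y) = φ(ab) ⊗ [x, y]` and `T u = ρ̃(u) ⊗ α`. All three
are `R`-multilinear, so each axiom of a hom-Lie-Rinehart algebra only has to be checked on pure
tensors, where it reduces to the corresponding axiom of `(L, [-,-], α)`, the representation
identities for `(ρ, φ)`, the `φ`-derivation rule and commutativity of `A`. For the hom-Jacobi
identity additivity in the first argument is enough, because the hom-Jacobiator is invariant under
cyclic permutations. -/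

open TensorProduct

section HomJacobiator

variable {R M : Type*} [CommSemiring R] [AddCommMonoid M] [Module R M]
  (B : M →ₗ[R] M →ₗ[R] M) (α : M →ₗ[R] M)

def homJacobiator (x y z : M) : M :=
  B (α x) (B y z) + B (α y) (B z x) + B (α z) (B x y)

theorem homJacobiator_cycle (x y z : M) :
    homJacobiator B α x y z = homJacobiator B α y z x := by
  simp only [homJacobiator]; abel

theorem homJacobiator_add_left (x₁ x₂ y z : M) :
    homJacobiator B α (x₁ + x₂) y z = homJacobiator B α x₁ y z + homJacobiator B α x₂ y z := by
  simp only [homJacobiator, map_add, LinearMap.add_apply]; abel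

theorem homJacobiator_zero_left (y z : M) : homJacobiator B α 0 y z = 0 := by
  simp [homJacobiator]

end HomJacobiator

theorem homJacobiator_eq_zero_of_tmul {R M N : Type*} [CommSemiring R] [AddCommMonoid M]
    [Module R M] [AddCommMonoid N] [Module R N] (B : M ⊗[R] N →ₗ[R] M ⊗[R] N →ₗ[R] M ⊗[R] N)
    (α : M ⊗[R] N →ₗ[R] M ⊗[R] N)
    (h : ∀ m₁ n₁ m₂ n₂ m₃ n₃, homJacobiator B α (m₁ ⊗ₜ n₁) (m₂ ⊗ₜ n₂) (m₃ ⊗ₜ n₃) = 0)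
    (u v w : M ⊗[R] N) : homJacobiator B α u v w = 0 := by
  have of_tmul_left (y z : M ⊗[R] N) (htmul : ∀ m n, homJacobiator B α (m ⊗ₜ n) y z = 0)
      (x : M ⊗[R] N) : homJacobiator B α x y z = 0 := by
    induction x using TensorProduct.induction_on with
    | zero => exact homJacobiator_zero_left B α y z
    | tmul m n => exact htmul m n
    | add x₁ x₂ h₁ h₂ => rw [homJacobiator_add_left, h₁, h₂, add_zero]
  refine of_tmul_left v w (fun m₁ n₁ => ?_) u
  rw [homJacobiator_cycle]
  refine of_tmul_left w _ (fun m₂ n₂ => ?_) v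
  rw [homJacobiator_cycle]
  exact of_tmul_left _ _ (fun m₃ n₃ => h m₃ n₃ m₁ n₁ m₂ n₂) w

def twistedDerivations {R A : Type*} [CommSemiring R] [CommSemiring A] [Algebra R A]
    (φ : A →ₐ[R] A) : Submodule A (A →ₗ[R] A) where
  carrier := {D | ∀ a b, D (a * b) = φ a * D b + φ b * D a}
  add_mem' {D E} hD hE a b := by
    simp only [LinearMap.add_apply, hD a b, hE a b]; ring
  zero_mem' a b := by simp
  smul_mem' c D hD a b := by
    simp only [LinearMap.smul_apply, smul_eq_mul, hD a b]; ring

section Transformation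

variable {R A L : Type*} [CommRing R] [CommRing A] [Algebra R A] [AddCommGroup L] [Module R L]
  (φ : A →ₐ[R] A) (br : L →ₗ[R] L →ₗ[R] L) (α : L →ₗ[R] L) (ρ : L →ₗ[R] A →ₗ[R] A)

noncomputable def transformationAnchor : A ⊗[R] L →ₗ[R] A →ₗ[R] A :=
  lift (((LinearMap.lsmul A (A →ₗ[R] A)).restrictScalars₁₂ R R).compl₁₂ φ.toLinearMap ρ)

noncomputable def transformationTwist : A ⊗[R] L →ₗ[R] A ⊗[R] L :=
  map φ.toLinearMap α

noncomputable def transformationBracket : A ⊗[R] L →ₗ[R] A ⊗[R] L →ₗ[R] A ⊗[R] L :=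
  let P := map₂ ((LinearMap.mul R A).compr₂ φ.toLinearMap) br
  let T := (mapBilinear (RingHom.id R) A L A L).flip α ∘ₗ transformationAnchor φ ρ
  { toFun u := P u + T u - T.flip u
    map_add' u v := by simp only [map_add]; abel
    map_smul' r u := by simp only [map_smul, RingHom.id_apply]; module }

@[simp] theorem transformationAnchor_tmul (a : A) (x : L) :
    transformationAnchor φ ρ (a ⊗ₜ x) = φ a • ρ x := rfl

@[simp] theorem transformationTwist_tmul (a : A) (x : L) :
    transformationTwist φ α (a ⊗ₜ x) = φ a ⊗ₜ α x := rfl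

@[simp] theorem transformationBracket_tmul (a b : A) (x y : L) :
    transformationBracket φ br α ρ (a ⊗ₜ x) (b ⊗ₜ y)
      = φ (a * b) ⊗ₜ[R] br x y + (φ a * ρ x b) ⊗ₜ[R] α y - (φ b * ρ y a) ⊗ₜ[R] α x := rfl

variable {br α ρ}

theorem transformationBracket_swap (hskew : ∀ x y, br x y = -br y x) (u v : A ⊗[R] L) :
    transformationBracket φ br α ρ u v = -transformationBracket φ br α ρ v u := by
  have h : transformationBracket φ br α ρ + (transformationBracket φ br α ρ).flip = 0 :=
    ext' fun a x => ext' fun b y => by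
      simp only [LinearMap.add_apply, LinearMap.flip_apply, transformationBracket_tmul,
        LinearMap.zero_apply, hskew y x, mul_comm b a, tmul_neg]
      abel
  exact eq_neg_of_add_eq_zero_left (LinearMap.congr_fun₂ h u v)

theorem transformationTwist_bracket (hα_br : ∀ x y, α (br x y) = br (α x) (α y))
    (hrep_α : ∀ x a, ρ (α x) (φ a) = φ (ρ x a)) (u v : A ⊗[R] L) :
    transformationTwist φ α (transformationBracket φ br α ρ u v)
      = transformationBracket φ br α ρ (transformationTwist φ α u) (transformationTwist φ α v) := by
  have h : (transformationBracket φ br α ρ).compr₂ (transformationTwist φ α)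
      = (transformationBracket φ br α ρ).compl₁₂ (transformationTwist φ α)
          (transformationTwist φ α) :=
    ext' fun a x => ext' fun b y => by
      simp [hα_br, hrep_α, map_mul]
  exact LinearMap.congr_fun₂ h u v

theorem transformationTwist_smul (a : A) (u : A ⊗[R] L) :
    transformationTwist φ α (a • u) = φ a • transformationTwist φ α u := by
  induction u using TensorProduct.induction_on with
  | zero => simp
  | tmul b x => simp [smul_tmul', map_mul]
  | add u₁ u₂ h₁ h₂ => simp only [smul_add, map_add, h₁, h₂]

theorem transformationAnchor_mem_twistedDerivations (hder : ∀ x, ρ x ∈ twistedDerivations φ)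
    (u : A ⊗[R] L) : transformationAnchor φ ρ u ∈ twistedDerivations φ := by
  induction u using TensorProduct.induction_on with
  | zero => simp only [map_zero, zero_mem]
  | tmul a x => exact (twistedDerivations φ).smul_mem (φ a) (hder x)
  | add u₁ u₂ h₁ h₂ => simpa only [map_add] using add_mem h₁ h₂

theorem transformationAnchor_smul (a : A) (u : A ⊗[R] L) :
    transformationAnchor φ ρ (a • u) = φ a • transformationAnchor φ ρ u := by
  induction u using TensorProduct.induction_on with
  | zero => simp
  | tmul b x => simp [smul_tmul', map_mul, mul_smul]
  | add u₁ u₂ h₁ h₂ => simp only [smul_add, map_add, h₁, h₂]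

theorem transformationAnchor_twist (hrep_α : ∀ x a, ρ (α x) (φ a) = φ (ρ x a))
    (u : A ⊗[R] L) (a : A) :
    transformationAnchor φ ρ (transformationTwist φ α u) (φ a)
      = φ (transformationAnchor φ ρ u a) := by
  induction u using TensorProduct.induction_on with
  | zero => simp
  | tmul b x => simp [hrep_α, map_mul]
  | add u₁ u₂ h₁ h₂ => simp only [map_add, LinearMap.add_apply, h₁, h₂]

theorem transformationAnchor_bracket (hder : ∀ x, ρ x ∈ twistedDerivations φ)
    (hrep_α : ∀ x a, ρ (α x) (φ a) = φ (ρ x a))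
    (hrep_br : ∀ x y a, ρ (br x y) (φ a) = ρ (α x) (ρ y a) - ρ (α y) (ρ x a))
    (u v : A ⊗[R] L) (a : A) :
    transformationAnchor φ ρ (transformationBracket φ br α ρ u v) (φ a)
      = transformationAnchor φ ρ (transformationTwist φ α u) (transformationAnchor φ ρ v a)
        - transformationAnchor φ ρ (transformationTwist φ α v) (transformationAnchor φ ρ u a) := by
  induction u using TensorProduct.induction_on with
  | zero => simp
  | add u₁ u₂ h₁ h₂ => simp only [map_add, LinearMap.add_apply, h₁, h₂]; ring
  | tmul b x =>
    induction v using TensorProduct.induction_on with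
    | zero => simp
    | add v₁ v₂ h₁ h₂ => simp only [map_add, LinearMap.add_apply, h₁, h₂]; ring
    | tmul c y =>
      simp only [transformationBracket_tmul, transformationTwist_tmul, map_add, map_sub,
        LinearMap.add_apply, LinearMap.sub_apply, transformationAnchor_tmul,
        LinearMap.smul_apply, smul_eq_mul, map_mul, hder _ _, hrep_α, hrep_br]
      ring

theorem transformationBracket_smul_right (hder : ∀ x, ρ x ∈ twistedDerivations φ)
    (u v : A ⊗[R] L) (a : A) :
    transformationBracket φ br α ρ u (a • v)
      = φ a • transformationBracket φ br α ρ u v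
        + transformationAnchor φ ρ u a • transformationTwist φ α v := by
  induction u using TensorProduct.induction_on with
  | zero => simp
  | add u₁ u₂ h₁ h₂ =>
    simp only [map_add, LinearMap.add_apply, add_smul, smul_add, h₁, h₂]; abel
  | tmul b x =>
    induction v using TensorProduct.induction_on with
    | zero => simp
    | add v₁ v₂ h₁ h₂ => simp only [smul_add, map_add, h₁, h₂]; abel
    | tmul c y =>
      simp only [smul_tmul', smul_eq_mul, transformationBracket_tmul, transformationTwist_tmul,
        transformationAnchor_tmul, LinearMap.smul_apply, smul_add, smul_sub, hder _ _, map_mul,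
        mul_add, add_tmul]
      ring_nf
      abel

theorem homJacobiator_transformationBracket_tmul (hskew : ∀ x y, br x y = -br y x)
    (hα_br : ∀ x y, α (br x y) = br (α x) (α y))
    (hjacobi : ∀ x y z, homJacobiator br α x y z = 0) (hder : ∀ x, ρ x ∈ twistedDerivations φ)
    (hrep_α : ∀ x a, ρ (α x) (φ a) = φ (ρ x a))
    (hrep_br : ∀ x y a, ρ (br x y) (φ a) = ρ (α x) (ρ y a) - ρ (α y) (ρ x a))
    (a : A) (x : L) (b : A) (y : L) (c : A) (z : L) :
    homJacobiator (transformationBracket φ br α ρ) (transformationTwist φ α)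
      (a ⊗ₜ x) (b ⊗ₜ y) (c ⊗ₜ z) = 0 := by
  -- After eliminating `[α z, [x, y]]` and ordering the brackets `[α ·, α ·]`, every remaining
  -- term cancels against another one with the same `L`-component.
  have hz : br (α z) (br x y) = -(br (α x) (br y z) + br (α y) (br z x)) :=
    eq_neg_of_add_eq_zero_right (hjacobi x y z)
  simp only [homJacobiator, transformationTwist_tmul, transformationBracket_tmul, map_add,
    map_sub, map_mul, hα_br, hrep_α, hrep_br, hder _ _, mul_add, mul_sub, add_tmul, sub_tmul,
    tmul_add, hz, hskew (α z) (α x), hskew (α y) (α x), hskew (α z) (α y), tmul_neg, neg_add]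
  ring_nf
  abel

theorem isHomLieRinehart_transformation (hskew : ∀ x y, br x y = -br y x)
    (hα_br : ∀ x y, α (br x y) = br (α x) (α y))
    (hjacobi : ∀ x y z, homJacobiator br α x y z = 0) (hder : ∀ x, ρ x ∈ twistedDerivations φ)
    (hrep_α : ∀ x a, ρ (α x) (φ a) = φ (ρ x a))
    (hrep_br : ∀ x y a, ρ (br x y) (φ a) = ρ (α x) (ρ y a) - ρ (α y) (ρ x a)) :
    IsHomLieRinehart R A (A ⊗[R] L) (fun u v => transformationBracket φ br α ρ u v) φ
      (transformationTwist φ α) (fun u => transformationAnchor φ ρ u) where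
  br_add_left u v w := by simp
  br_smul_left r u v := by simp
  br_skew := transformationBracket_swap φ hskew
  α_add := map_add _
  α_smul := map_smul _
  α_br := transformationTwist_bracket φ hα_br hrep_α
  hom_jacobi := homJacobiator_eq_zero_of_tmul _ _
    (homJacobiator_transformationBracket_tmul φ hskew hα_br hjacobi hder hrep_α hrep_br)
  α_smulA := transformationTwist_smul φ
  ρ_add_left u v a := by simp
  ρ_smul_left r u a := by simp
  ρ_add_right u := map_add _
  ρ_smul_right u := map_smul _
  ρ_der := transformationAnchor_mem_twistedDerivations φ hder
  ρ_smulA a u b := by rw [transformationAnchor_smul]; rfl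
  rep_α := transformationAnchor_twist φ hrep_α
  rep_br := transformationAnchor_bracket φ hder hrep_α hrep_br
  hom_leibniz := transformationBracket_smul_right φ hder

end Transformation
/-- Given a hom-Lie algebra `(L, br, α)` over `R`, an algebra endomorphism
`φ : A → A` and an action `ρ : L → Der_φ(A)` such that `(ρ, φ)` is a representation of
`(L, br, α)` on `A`, the `A`-module `A ⊗[R] L` carries a hom-Lie-Rinehart algebra structure
over `(A, φ)` — the transformation hom-Lie-Rinehart algebra — whose bracket, twisting map
and anchor are given on pure tensors by the stated formulas. -/
theorem transformation_homLieRinehart (R A L : Type*) [CommRing R] [CommRing A] [Algebra R A]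
    [AddCommGroup L] [Module R L]
    (br : L → L → L) (α : L → L)
    (br_add_left : ∀ x y z : L, br (x + y) z = br x z + br y z)
    (br_smul_left : ∀ (r : R) (x y : L), br (r • x) y = r • br x y)
    (br_skew : ∀ x y : L, br x y = - br y x)
    (α_add : ∀ x y : L, α (x + y) = α x + α y)
    (α_smul : ∀ (r : R) (x : L), α (r • x) = r • α x)
    (α_br : ∀ x y : L, α (br x y) = br (α x) (α y))
    (hom_jacobi : ∀ x y z : L,
      br (α x) (br y z) + br (α y) (br z x) + br (α z) (br x y) = 0)
    (φ : A →ₐ[R] A) (ρ : L → A → A)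
    (ρ_add_left : ∀ (x y : L) (a : A), ρ (x + y) a = ρ x a + ρ y a)
    (ρ_smul_left : ∀ (r : R) (x : L) (a : A), ρ (r • x) a = r • ρ x a)
    (ρ_add_right : ∀ (x : L) (a b : A), ρ x (a + b) = ρ x a + ρ x b)
    (ρ_smul_right : ∀ (x : L) (r : R) (a : A), ρ x (r • a) = r • ρ x a)
    (ρ_der : ∀ (x : L) (a b : A), ρ x (a * b) = φ a * ρ x b + φ b * ρ x a)
    (rep_α : ∀ (x : L) (a : A), ρ (α x) (φ a) = φ (ρ x a))
    (rep_br : ∀ (x y : L) (a : A),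
      ρ (br x y) (φ a) = ρ (α x) (ρ y a) - ρ (α y) (ρ x a)) :
    ∃ (brg : A ⊗[R] L → A ⊗[R] L → A ⊗[R] L) (αg : A ⊗[R] L → A ⊗[R] L)
      (ρg : A ⊗[R] L → A → A),
      IsHomLieRinehart R A (A ⊗[R] L) brg φ αg ρg ∧
      (∀ (a b : A) (x y : L),
        brg (a ⊗ₜ[R] x) (b ⊗ₜ[R] y)
          = φ (a * b) ⊗ₜ[R] br x y + (φ a * ρ x b) ⊗ₜ[R] α y - (φ b * ρ y a) ⊗ₜ[R] α x) ∧
      (∀ (a : A) (x : L), αg (a ⊗ₜ[R] x) = φ a ⊗ₜ[R] α x) ∧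
      (∀ (a b : A) (x : L), ρg (a ⊗ₜ[R] x) b = φ a * ρ x b) := by
  have br_add_right (x y z : L) : br x (y + z) = br x y + br x z := by
    rw [br_skew, br_add_left, neg_add, ← br_skew, ← br_skew]
  have br_smul_right (r : R) (x y : L) : br x (r • y) = r • br x y := by
    rw [br_skew, br_smul_left, ← smul_neg, ← br_skew]
  let brL := LinearMap.mk₂ R br br_add_left br_smul_left br_add_right br_smul_right
  let αL : L →ₗ[R] L := ⟨⟨α, α_add⟩, α_smul⟩
  let ρL := LinearMap.mk₂ R ρ ρ_add_left ρ_smul_left ρ_add_right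
    fun r x a => ρ_smul_right x r a
  exact ⟨_, _, _, isHomLieRinehart_transformation φ (br := brL) (α := αL) (ρ := ρL) br_skew α_br
    hom_jacobi ρ_der rep_α rep_br, fun _ _ _ _ => rfl, fun _ _ => rfl, fun _ _ _ => rfl⟩
end

section
/- Let M →i L′ →σ L be an A-split abelian extension of a hom-Lie-Rinehart algebra (A, L, [-,-], φ, α, ρ) over (A,φ) by a left module (M,β), and let τ, τ′: L → L′ be two A-linear sections of σ each satisfying τ∘α = α′∘τ (resp. τ′∘α = α′∘τ′). Then the associated 2-cocycles are cohomologous: Ω_{τ′} − Ω_τ = δ(i⁻¹∘(τ′ − τ)), where i⁻¹∘(τ′ − τ) ∈ C¹(L;M) and Ω_τ(x,y) = i⁻¹([τ(x),τ(y)]′ − τ([x,y])). -/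
/-- A left module `(M, β)` over the hom-Lie-Rinehart algebra `(A, L, br, φ, α, ρ)`, with
action `θ : L → M → M`: `(θ, β)` is a representation of the hom-Lie algebra `(L, br, α)`
on `M`, `β(a•m) = φ(a)•β(m)`, `θ(a•x)(m) = φ(a)•θ(x)(m)` and
`θ(x)(a•m) = φ(a)•θ(x)(m) + ρ(x)(a)•β(m)`. -/
structure IsHLRModule (R A L M : Type*) [CommRing R] [CommRing A] [Algebra R A]
    [AddCommGroup L] [Module R L] [Module A L]
    [AddCommGroup M] [Module R M] [Module A M]
    (br : L → L → L) (φ : A → A) (α : L → L) (ρ : L → A → A)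
    (β : M → M) (θ : L → M → M) : Prop where
  β_add : ∀ m n : M, β (m + n) = β m + β n
  β_smul : ∀ (r : R) (m : M), β (r • m) = r • β m
  θ_add_left : ∀ (x y : L) (m : M), θ (x + y) m = θ x m + θ y m
  θ_smul_left : ∀ (r : R) (x : L) (m : M), θ (r • x) m = r • θ x m
  θ_add_right : ∀ (x : L) (m n : M), θ x (m + n) = θ x m + θ x n
  θ_smul_right : ∀ (x : L) (r : R) (m : M), θ x (r • m) = r • θ x m
  rep_α : ∀ (x : L) (m : M), θ (α x) (β m) = β (θ x m)
  rep_br : ∀ (x y : L) (m : M), θ (br x y) (β m) = θ (α x) (θ y m) - θ (α y) (θ x m)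
  β_smulA : ∀ (a : A) (m : M), β (a • m) = φ a • β m
  θ_smulA_left : ∀ (a : A) (x : L) (m : M), θ (a • x) m = φ a • θ x m
  θ_smulA_right : ∀ (x : L) (a : A) (m : M), θ x (a • m) = φ a • θ x m + ρ x a • β m

/-- If `τ` and `τ′` are two `A`-linear sections (commuting with the
twisting maps) of an `A`-split abelian extension `M →i L′ →σ L`, then the associated
2-cocycles are cohomologous: `Ω_{τ′} − Ω_τ = δ(i⁻¹∘(τ′ − τ))`, where
`i⁻¹∘(τ′ − τ) ∈ C¹(L;M)`. -/
theorem section_cocycles_cohomologous (R A L L' M : Type*) [CommRing R] [CommRing A]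
    [Algebra R A]
    [AddCommGroup L] [Module R L] [Module A L]
    [AddCommGroup L'] [Module R L'] [Module A L']
    [AddCommGroup M] [Module R M] [Module A M]
    (br : L → L → L) (φ : A →ₐ[R] A) (α : L → L) (ρ : L → A → A)
    (br' : L' → L' → L') (α' : L' → L') (ρ' : L' → A → A)
    (β : M → M) (θ : L → M → M)
    (hLR : IsHomLieRinehart R A L br φ α ρ)
    (hLR' : IsHomLieRinehart R A L' br' φ α' ρ')
    (hMod : IsHLRModule R A L M br φ α ρ β θ)
    (i : M → L') (σ : L' → L)
    (i_add : ∀ m n : M, i (m + n) = i m + i n)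
    (i_smulR : ∀ (r : R) (m : M), i (r • m) = r • i m)
    (i_smulA : ∀ (a : A) (m : M), i (a • m) = a • i m)
    (i_inj : Function.Injective i)
    (i_br : ∀ m n : M, br' (i m) (i n) = 0)
    (i_α : ∀ m : M, α' (i m) = i (β m))
    (σ_add : ∀ x y : L', σ (x + y) = σ x + σ y)
    (σ_smulR : ∀ (r : R) (x : L'), σ (r • x) = r • σ x)
    (σ_smulA : ∀ (a : A) (x : L'), σ (a • x) = a • σ x)
    (σ_surj : Function.Surjective σ)
    (σ_br : ∀ x y : L', σ (br' x y) = br (σ x) (σ y))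
    (σ_α : ∀ x : L', σ (α' x) = α (σ x))
    (exact : ∀ x : L', σ x = 0 ↔ ∃ m : M, i m = x)
    (ρ'_σ : ∀ (x : L') (a : A), ρ' x a = ρ (σ x) a)
    (abelian : ∀ (x : L') (m : M), br' x (i m) = i (θ (σ x) m))
    -- the two A-linear sections τ and τ′ of σ:
    (τ τ' : L → L')
    (τ_add : ∀ x y : L, τ (x + y) = τ x + τ y)
    (τ_smulR : ∀ (r : R) (x : L), τ (r • x) = r • τ x)
    (τ_smulA : ∀ (a : A) (x : L), τ (a • x) = a • τ x)
    (τ_sec : ∀ x : L, σ (τ x) = x)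
    (τ_α : ∀ x : L, τ (α x) = α' (τ x))
    (τ'_add : ∀ x y : L, τ' (x + y) = τ' x + τ' y)
    (τ'_smulR : ∀ (r : R) (x : L), τ' (r • x) = r • τ' x)
    (τ'_smulA : ∀ (a : A) (x : L), τ' (a • x) = a • τ' x)
    (τ'_sec : ∀ x : L, σ (τ' x) = x)
    (τ'_α : ∀ x : L, τ' (α x) = α' (τ' x))
    -- the associated 2-cocycles and the 1-cochain g = i⁻¹∘(τ′ − τ):
    (Ω Ω' : L → L → M) (g : L → M)
    (hΩ : ∀ x y : L, i (Ω x y) = br' (τ x) (τ y) - τ (br x y))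
    (hΩ' : ∀ x y : L, i (Ω' x y) = br' (τ' x) (τ' y) - τ' (br x y))
    (hg : ∀ x : L, i (g x) = τ' x - τ x) :
    -- g is a 1-cochain in C¹(L;M):
    (∀ x y : L, g (x + y) = g x + g y) ∧
    (∀ (r : R) (x : L), g (r • x) = r • g x) ∧
    (∀ (a : A) (x : L), g (a • x) = a • g x) ∧
    (∀ x : L, g (α x) = β (g x)) ∧
    -- Ω_{τ′} − Ω_τ = δg:
    (∀ x y : L, Ω' x y - Ω x y = θ x (g y) - θ y (g x) - g (br x y)) := by
  have i_neg : ∀ m : M, i (-m) = - i m := fun m => by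
    rw [← neg_one_smul R m, i_smulR, neg_one_smul]
  have i_sub : ∀ m n : M, i (m - n) = i m - i n := fun m n => by
    rw [sub_eq_add_neg, i_add, i_neg, sub_eq_add_neg]
  have br'_neg_left : ∀ x y : L', br' (-x) y = - br' x y := fun x y => by
    rw [← neg_one_smul R x, hLR'.br_smul_left, neg_one_smul]
  have br'_sub_left : ∀ x y z : L', br' (x - y) z = br' x z - br' y z := fun x y z => by
    rw [sub_eq_add_neg, hLR'.br_add_left, br'_neg_left, sub_eq_add_neg]
  have br'_sub_right : ∀ x y z : L', br' x (y - z) = br' x y - br' x z := fun x y z => by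
    rw [hLR'.br_skew x (y - z), br'_sub_left, hLR'.br_skew y x, hLR'.br_skew z x]
    abel
  have α'_neg : ∀ x : L', α' (-x) = - α' x := fun x => by
    rw [← neg_one_smul R x, hLR'.α_smul, neg_one_smul]
  have α'_sub : ∀ x y : L', α' (x - y) = α' x - α' y := fun x y => by
    rw [sub_eq_add_neg, hLR'.α_add, α'_neg, sub_eq_add_neg]
  refine ⟨?_, ?_, ?_, ?_, ?_⟩
  · intro x y
    apply i_inj
    rw [i_add, hg, hg, hg, τ_add, τ'_add]; abel
  · intro r x
    apply i_inj
    rw [i_smulR, hg, hg, τ_smulR, τ'_smulR, smul_sub]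
  · intro a x
    apply i_inj
    rw [i_smulA, hg, hg, τ_smulA, τ'_smulA, smul_sub]
  · intro x
    apply i_inj
    rw [hg, τ_α, τ'_α, ← i_α, hg, α'_sub]
  · intro x y
    apply i_inj
    have hgy := hg y
    have hgx := hg x
    have haxy : i (θ x (g y)) = br' (τ x) (τ' y) - br' (τ x) (τ y) := by
      have h := abelian (τ x) (g y)
      rw [τ_sec, hg, br'_sub_right] at h
      exact h.symm
    have hayx : i (θ y (g x)) = br' (τ y) (τ' x) - br' (τ y) (τ x) := by
      have h := abelian (τ y) (g x)
      rw [τ_sec, hg, br'_sub_right] at h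
      exact h.symm
    rw [i_sub, i_sub, i_sub, hΩ, hΩ', hg, haxy, hayx]
    have key : br' (τ' x) (τ' y) - br' (τ x) (τ' y)
        = br' (τ y) (τ x) - br' (τ y) (τ' x) := by
      have h1 : br' (τ' x) (τ' y) - br' (τ x) (τ' y) = - i (θ y (g x)) := by
        rw [← br'_sub_left, ← hgx, hLR'.br_skew (i (g x)) (τ' y), abelian, τ'_sec]
      have h2 : br' (τ y) (τ x) - br' (τ y) (τ' x) = - i (θ y (g x)) := by
        rw [← neg_sub (br' (τ y) (τ' x)), ← br'_sub_right, ← hgx, abelian, τ_sec]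
      rw [h1, h2]
    have key2 : br' (τ' x) (τ' y) + br' (τ y) (τ' x)
        = br' (τ x) (τ' y) + br' (τ y) (τ x) :=
      (sub_eq_sub_iff_add_eq_add.mp key).trans (add_comm _ _)
    rw [eq_sub_of_add_eq key2]
    abel
end

section
/- Let (A, L, [-,-], φ, α, ρ) be a hom-Lie-Rinehart algebra over (A,φ), (M,β) a left module over it, f ∈ C²(L;M) a 2-cocycle, and E_f the extension hom-Lie-Rinehart algebra on L ⊕ M with bracket [(x,m),(y,n)]′ = ([x,y], {x,n} − {y,m} + f(x,y)), α′(x,m) = (α(x),β(m)), ρ′(x,m) = ρ(x). If ψ ∈ C¹(L;M) is a 1-cocycle (ψ: L → M is A-linear, ψ∘α = β∘ψ, and δψ = 0, i.e. {x,ψ(y)} − {y,ψ(x)} − ψ([x,y]) = 0 for all x,y ∈ L), then F: E_f → E_f defined by F(x,m) = (x, m + ψ(x)) is an automorphism of the extension: F is an A-linear bijection preserving the bracket, satisfying α′∘F = F∘α′, ρ′∘F = ρ′, F∘i = i, and π∘F = π (where i(m) = (0,m), π(x,m) = x). -/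
/-- Given a hom-Lie-Rinehart algebra `(A, L, br, φ, α, ρ)`, a left module
`(M, β)` with action `θ`, a 2-cocycle `f ∈ C²(L;M)` and the extension `E_f` on `L ⊕ M`, any
1-cocycle `ψ ∈ C¹(L;M)` gives rise to an automorphism `F(x,m) = (x, m + ψ x)` of the
extension `E_f`. -/
theorem one_cocycle_gives_automorphism (R A L M : Type*) [CommRing R] [CommRing A]
    [Algebra R A]
    [AddCommGroup L] [Module R L] [Module A L]
    [AddCommGroup M] [Module R M] [Module A M]
    (br : L → L → L) (φ : A →ₐ[R] A) (α : L → L) (ρ : L → A → A)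
    (β : M → M) (θ : L → M → M)
    (hLR : IsHomLieRinehart R A L br φ α ρ)
    (hMod : IsHLRModule R A L M br φ α ρ β θ)
    -- the 2-cocycle f:
    (f : L → L → M)
    (f_skew : ∀ x y : L, f x y = - f y x)
    (f_add_left : ∀ x y z : L, f (x + y) z = f x z + f y z)
    (f_smul_left : ∀ (r : R) (x y : L), f (r • x) y = r • f x y)
    (f_smulA : ∀ (a : A) (x y : L), f (a • x) y = φ a • f x y)
    (f_β : ∀ x y : L, f (α x) (α y) = β (f x y))
    (f_cocycle : ∀ x y z : L,
      θ (α x) (f y z) - θ (α y) (f x z) + θ (α z) (f x y)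
        + f (br x y) (α z) - f (br x z) (α y) + f (br y z) (α x) = 0)
    -- the 1-cocycle ψ:
    (ψ : L → M)
    (ψ_add : ∀ x y : L, ψ (x + y) = ψ x + ψ y)
    (ψ_smulA : ∀ (a : A) (x : L), ψ (a • x) = a • ψ x)
    (ψ_β : ∀ x : L, ψ (α x) = β (ψ x))
    (ψ_cocycle : ∀ x y : L, θ x (ψ y) - θ y (ψ x) - ψ (br x y) = 0) :
    -- F(x,m) = (x, m + ψ x) is an automorphism of the extension E_f:
    Function.Bijective (fun p : L × M => ((p.1, p.2 + ψ p.1) : L × M)) ∧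
    (∀ p q : L × M, (((p + q).1, (p + q).2 + ψ (p + q).1) : L × M)
        = ((p.1, p.2 + ψ p.1) : L × M) + (q.1, q.2 + ψ q.1)) ∧
    (∀ (a : A) (p : L × M), (((a • p).1, (a • p).2 + ψ (a • p).1) : L × M)
        = a • ((p.1, p.2 + ψ p.1) : L × M)) ∧
    -- F preserves the bracket of E_f:
    (∀ p q : L × M,
      ((br p.1 q.1, (θ p.1 q.2 - θ q.1 p.2 + f p.1 q.1) + ψ (br p.1 q.1)) : L × M)
        = (br p.1 q.1,
            θ p.1 (q.2 + ψ q.1) - θ q.1 (p.2 + ψ p.1) + f p.1 q.1)) ∧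
    -- α′ ∘ F = F ∘ α′:
    (∀ p : L × M, ((α p.1, β p.2 + ψ (α p.1)) : L × M) = (α p.1, β (p.2 + ψ p.1))) ∧
    -- ρ′ ∘ F = ρ′:
    (∀ (p : L × M) (a : A), ρ ((p.1, p.2 + ψ p.1) : L × M).1 a = ρ p.1 a) ∧
    -- F ∘ i = i and π ∘ F = π:
    (∀ m : M, (((0 : L), m + ψ (0 : L)) : L × M) = (0, m)) ∧
    (∀ p : L × M, ((p.1, p.2 + ψ p.1) : L × M).1 = p.1) := by
  have ψ0 : ψ (0 : L) = 0 := by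
    have h := ψ_add 0 0
    simpa using h.symm
  refine ⟨?_, ?_, ?_, ?_, ?_, ?_, ?_, ?_⟩
  · refine ⟨?_, ?_⟩
    · intro p q h
      simp only [Prod.ext_iff] at h
      obtain ⟨h1, h2⟩ := h
      rw [h1] at h2
      have : p.2 = q.2 := by exact add_right_cancel h2
      exact Prod.ext h1 this
    · intro p
      exact ⟨(p.1, p.2 - ψ p.1), by simp⟩
  · intro p q
    simp [ψ_add, Prod.ext_iff]
    abel
  · intro a p
    simp [Prod.smul_def, ψ_smulA, smul_add]
  · intro p q
    have hc := ψ_cocycle p.1 q.1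
    have : ψ (br p.1 q.1) = θ p.1 (ψ q.1) - θ q.1 (ψ p.1) := by
      exact (sub_eq_zero.mp hc).symm
    simp [hMod.θ_add_right, this, Prod.ext_iff]
    abel
  · intro p
    simp [hMod.β_add, ψ_β]
  · intro p a; rfl
  · intro m; simp [ψ0]
  · intro p; rfl
end

section
/- Let (A, L, [-,-], φ, α, ρ) be a hom-Lie-Rinehart algebra over (A,φ), (M,β) a left module over it, f ∈ C²(L;M) a 2-cocycle, and E_f the extension hom-Lie-Rinehart algebra on L ⊕ M with bracket [(x,m),(y,n)]′ = ([x,y], {x,n} − {y,m} + f(x,y)), α′(x,m) = (α(x),β(m)), ρ′(x,m) = ρ(x). If F: E_f → E_f is an automorphism of the extension (an A-linear bijection preserving the bracket with α′∘F = F∘α′, F∘i = i and π∘F = π, where i(m) = (0,m), π(x,m) = x), then the map ψ: L → M defined by F(x,0) = (x, ψ(x)) satisfies F(x,m) = (x, m + ψ(x)) for all (x,m), and ψ is a 1-cocycle: ψ is A-linear, ψ∘α = β∘ψ, and {x,ψ(y)} − {y,ψ(x)} − ψ([x,y]) = 0 for all x,y ∈ L. -/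
/-- Let `E_f` be the extension of a hom-Lie-Rinehart algebra
`(A, L, br, φ, α, ρ)` by a left module `(M, β)` determined by a 2-cocycle `f`. Any
automorphism `F` of the extension `E_f` (an `A`-linear bracket-preserving bijection with
`α′∘F = F∘α′`, `F∘i = i`, `π∘F = π`) is of the form `F(x,m) = (x, m + ψ x)` where
`ψ x = (F (x,0)).2`, and `ψ` is a 1-cocycle in `C¹(L;M)`. -/
theorem automorphism_gives_one_cocycle (R A L M : Type*) [CommRing R] [CommRing A]
    [Algebra R A]
    [AddCommGroup L] [Module R L] [Module A L]
    [AddCommGroup M] [Module R M] [Module A M]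
    (br : L → L → L) (φ : A →ₐ[R] A) (α : L → L) (ρ : L → A → A)
    (β : M → M) (θ : L → M → M)
    (hLR : IsHomLieRinehart R A L br φ α ρ)
    (hMod : IsHLRModule R A L M br φ α ρ β θ)
    -- the 2-cocycle f:
    (f : L → L → M)
    (f_skew : ∀ x y : L, f x y = - f y x)
    (f_add_left : ∀ x y z : L, f (x + y) z = f x z + f y z)
    (f_smul_left : ∀ (r : R) (x y : L), f (r • x) y = r • f x y)
    (f_smulA : ∀ (a : A) (x y : L), f (a • x) y = φ a • f x y)
    (f_β : ∀ x y : L, f (α x) (α y) = β (f x y))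
    (f_cocycle : ∀ x y z : L,
      θ (α x) (f y z) - θ (α y) (f x z) + θ (α z) (f x y)
        + f (br x y) (α z) - f (br x z) (α y) + f (br y z) (α x) = 0)
    -- F is an automorphism of the extension E_f:
    (F : L × M → L × M)
    (F_bij : Function.Bijective F)
    (F_add : ∀ p q : L × M, F (p + q) = F p + F q)
    (F_smulR : ∀ (r : R) (p : L × M), F (r • p) = r • F p)
    (F_smulA : ∀ (a : A) (p : L × M), F (a • p) = a • F p)
    (F_br : ∀ p q : L × M,
      F (br p.1 q.1, θ p.1 q.2 - θ q.1 p.2 + f p.1 q.1)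
        = (br (F p).1 (F q).1,
            θ (F p).1 (F q).2 - θ (F q).1 (F p).2 + f (F p).1 (F q).1))
    (F_α : ∀ p : L × M, F (α p.1, β p.2) = (α (F p).1, β (F p).2))
    (F_i : ∀ m : M, F ((0 : L), m) = ((0 : L), m))
    (F_π : ∀ p : L × M, (F p).1 = p.1) :
    -- F(x,m) = (x, m + ψ x) for ψ x = (F (x,0)).2, and ψ is a 1-cocycle:
    (∀ (x : L) (m : M), F (x, m) = (x, m + (F (x, (0 : M))).2)) ∧
    (∀ x y : L, (F (x + y, (0 : M))).2 = (F (x, (0 : M))).2 + (F (y, (0 : M))).2) ∧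
    (∀ (r : R) (x : L), (F (r • x, (0 : M))).2 = r • (F (x, (0 : M))).2) ∧
    (∀ (a : A) (x : L), (F (a • x, (0 : M))).2 = a • (F (x, (0 : M))).2) ∧
    (∀ x : L, (F (α x, (0 : M))).2 = β ((F (x, (0 : M))).2)) ∧
    (∀ x y : L,
      θ x ((F (y, (0 : M))).2) - θ y ((F (x, (0 : M))).2)
        - (F (br x y, (0 : M))).2 = 0) := by

  have hβ0 : β 0 = 0 := by
    have h := hMod.β_add 0 0
    rw [add_zero] at h
    have := h.symm
    simpa using this
  have hθ0 : ∀ x : L, θ x 0 = 0 := by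
    intro x
    have h := hMod.θ_add_right x 0 0
    rw [add_zero] at h
    simpa using h.symm
  have hF0 : ∀ x : L, F (x, (0:M)) = (x, (F (x, (0:M))).2) := by
    intro x
    ext
    · exact F_π (x, 0)
    · rfl
  have hF : ∀ (x : L) (m : M), F (x, m) = (x, m + (F (x, (0 : M))).2) := by
    intro x m
    have h : (x, m) = ((x, (0:M)) + ((0:L), m)) := by simp
    rw [h, F_add, F_i, hF0]
    ext <;> simp [add_comm]
  refine ⟨hF, ?_, ?_, ?_, ?_, ?_⟩
  · intro x y
    have h : ((x + y, (0:M))) = ((x, (0:M)) + (y, (0:M))) := by simp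
    rw [h, F_add]; rfl
  · intro r x
    have h : ((r • x, (0:M))) = (r • ((x, (0:M)) : L × M)) := by
      ext <;> simp
    rw [h, F_smulR]; rfl
  · intro a x
    have h : ((a • x, (0:M))) = (a • ((x, (0:M)) : L × M)) := by
      ext <;> simp
    rw [h, F_smulA]; rfl
  · intro x
    have h := F_α (x, (0:M))
    simp only [hβ0] at h
    rw [hF0 x] at h
    have h2 := congrArg Prod.snd h
    simpa using h2
  · intro x y
    have h := F_br (x, (0:M)) (y, (0:M))
    simp only [hθ0, sub_zero, zero_add, F_π] at h
    rw [hF (br x y) (f x y)] at h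
    have h2 := congrArg Prod.snd h
    simp only at h2
    have h3 : (F (br x y, (0:M))).2 = θ x (F (y, (0:M))).2 - θ y (F (x, (0:M))).2 := by
      have h4 : f x y + (F (br x y, (0:M))).2
          = f x y + (θ x (F (y, (0:M))).2 - θ y (F (x, (0:M))).2) := by
        rw [h2]; abel
      exact add_left_cancel h4
    rw [h3]; abel
end

section
/- Let (A, L, [-,-]₁, φ, α, ρ) be a hom-Lie-Rinehart algebra over (A,φ) acting on a hom-Lie-Rinehart algebra (A, M, [-,-]₂, φ, β, 0) over (A,φ) with trivial anchor, via an action {-,-}: L × M → M such that ({-,-},β) is a representation of (L,[-,-]₁,α) on M, {α(x),[m,n]₂} = [{x,m},β(n)]₂ + [β(m),{x,n}]₂, {a·x, m} = φ(a)·{x,m}, and {x, a·m} = φ(a)·{x,m} + ρ(x)(a)·β(m) for all x ∈ L, m,n ∈ M, a ∈ A. Then L′ = L ⊕ M with bracket [(x,m),(y,n)]′ = ([x,y]₁, [m,n]₂ + {x,n} − {y,m}), endomorphism α′(x,m) = (α(x),β(m)), and anchor ρ′(x,m) = ρ(x) is a hom-Lie-Rinehart algebra over (A,φ) (the semi-direct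 product). -/
/-- Let `(A, L, br₁, φ, α, ρ)` be a hom-Lie-Rinehart algebra over `(A,φ)`
acting on a hom-Lie-Rinehart algebra `(A, M, br₂, φ, β, 0)` with trivial anchor, via
`θ : L × M → M`. Then `L′ = L ⊕ M` with bracket
`[(x,m),(y,n)]′ = (br₁ x y, br₂ m n + θ x n − θ y m)`, twisting `α′(x,m) = (α x, β m)` and
anchor `ρ′(x,m) = ρ x` is a hom-Lie-Rinehart algebra over `(A, φ)` (the semi-direct
product). -/
theorem semidirect_product_homLieRinehart (R A L M : Type*) [CommRing R] [CommRing A]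
    [Algebra R A]
    [AddCommGroup L] [Module R L] [Module A L]
    [AddCommGroup M] [Module R M] [Module A M]
    (br₁ : L → L → L) (φ : A →ₐ[R] A) (α : L → L) (ρ : L → A → A)
    (br₂ : M → M → M) (β : M → M)
    (hL : IsHomLieRinehart R A L br₁ φ α ρ)
    -- (A, M, br₂, φ, β, 0) is a hom-Lie-Rinehart algebra over (A, φ) with trivial anchor:
    (hM : IsHomLieRinehart R A M br₂ φ β (fun _ _ => (0 : A)))
    -- the action θ of (L, α) on (M, β):
    (θ : L → M → M)
    (θ_add_left : ∀ (x y : L) (m : M), θ (x + y) m = θ x m + θ y m)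
    (θ_smul_left : ∀ (r : R) (x : L) (m : M), θ (r • x) m = r • θ x m)
    (θ_add_right : ∀ (x : L) (m n : M), θ x (m + n) = θ x m + θ x n)
    (θ_smul_right : ∀ (x : L) (r : R) (m : M), θ x (r • m) = r • θ x m)
    -- (θ, β) is a representation of (L, br₁, α) on M:
    (rep_α : ∀ (x : L) (m : M), θ (α x) (β m) = β (θ x m))
    (rep_br : ∀ (x y : L) (m : M), θ (br₁ x y) (β m) = θ (α x) (θ y m) - θ (α y) (θ x m))
    -- θ acts by derivations of the bracket br₂:
    (θ_der : ∀ (x : L) (m n : M),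
      θ (α x) (br₂ m n) = br₂ (θ x m) (β n) + br₂ (β m) (θ x n))
    -- A-module compatibilities of the action:
    (θ_smulA_left : ∀ (a : A) (x : L) (m : M), θ (a • x) m = φ a • θ x m)
    (θ_smulA_right : ∀ (x : L) (a : A) (m : M), θ x (a • m) = φ a • θ x m + ρ x a • β m) :
    IsHomLieRinehart R A (L × M)
      (fun p q => (br₁ p.1 q.1, br₂ p.2 q.2 + θ p.1 q.2 - θ q.1 p.2))
      φ (fun p => (α p.1, β p.2)) (fun p => ρ p.1) := by

  -- derived lemmas
  have b2_neg_left : ∀ m n : M, br₂ (-m) n = -br₂ m n := fun m n => by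
    rw [← neg_one_smul R m, hM.br_smul_left, neg_one_smul]
  have b2_add_right : ∀ m n p : M, br₂ m (n + p) = br₂ m n + br₂ m p := fun m n p => by
    rw [hM.br_skew, hM.br_add_left, hM.br_skew n m, hM.br_skew p m]; abel
  have b2_neg_right : ∀ m n : M, br₂ m (-n) = -br₂ m n := fun m n => by
    rw [hM.br_skew, b2_neg_left, hM.br_skew n m]; abel
  have b2_sub_right : ∀ m n p : M, br₂ m (n - p) = br₂ m n - br₂ m p := fun m n p => by
    rw [sub_eq_add_neg, b2_add_right, b2_neg_right, sub_eq_add_neg]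
  have θ_neg_right : ∀ (x : L) (m : M), θ x (-m) = -θ x m := fun x m => by
    rw [← neg_one_smul R m, θ_smul_right, neg_one_smul]
  have θ_sub_right : ∀ (x : L) (m n : M), θ x (m - n) = θ x m - θ x n := fun x m n => by
    rw [sub_eq_add_neg, θ_add_right, θ_neg_right, sub_eq_add_neg]
  have θ_neg_left : ∀ (x : L) (m : M), θ (-x) m = -θ x m := fun x m => by
    rw [← neg_one_smul R x, θ_smul_left, neg_one_smul]
  have β_neg : ∀ m : M, β (-m) = -β m := fun m => by
    rw [← neg_one_smul R m, hM.α_smul, neg_one_smul]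
  have β_sub : ∀ m n : M, β (m - n) = β m - β n := fun m n => by
    rw [sub_eq_add_neg, hM.α_add, β_neg, sub_eq_add_neg]
  constructor
  · intro x y z
    refine Prod.ext (hL.br_add_left _ _ _) ?_
    show br₂ (x.2 + y.2) z.2 + θ (x.1 + y.1) z.2 - θ z.1 (x.2 + y.2) = _
    rw [hM.br_add_left, θ_add_left, θ_add_right]
    show _ = br₂ x.2 z.2 + θ x.1 z.2 - θ z.1 x.2 + (br₂ y.2 z.2 + θ y.1 z.2 - θ z.1 y.2)
    abel
  · intro r x y
    refine Prod.ext (hL.br_smul_left _ _ _) ?_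
    show br₂ (r • x.2) y.2 + θ (r • x.1) y.2 - θ y.1 (r • x.2) = _
    rw [hM.br_smul_left, θ_smul_left, θ_smul_right]
    show _ = r • (br₂ x.2 y.2 + θ x.1 y.2 - θ y.1 x.2)
    rw [smul_sub, smul_add]
  · intro x y
    refine Prod.ext (hL.br_skew _ _) ?_
    show br₂ x.2 y.2 + θ x.1 y.2 - θ y.1 x.2 = _
    rw [hM.br_skew]
    show _ = -(br₂ y.2 x.2 + θ y.1 x.2 - θ x.1 y.2)
    abel
  · intro x y
    exact Prod.ext (hL.α_add _ _) (hM.α_add _ _)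
  · intro r x
    exact Prod.ext (hL.α_smul _ _) (hM.α_smul _ _)
  · intro x y
    refine Prod.ext (hL.α_br _ _) ?_
    show β (br₂ x.2 y.2 + θ x.1 y.2 - θ y.1 x.2) = _
    rw [sub_eq_add_neg, hM.α_add, hM.α_add, β_neg, hM.α_br, rep_α, rep_α, ← sub_eq_add_neg]
  · intro x y z
    refine Prod.ext (hL.hom_jacobi _ _ _) ?_
    have jac := hM.hom_jacobi x.2 y.2 z.2
    show br₂ (β x.2) (br₂ y.2 z.2 + θ y.1 z.2 - θ z.1 y.2)
        + θ (α x.1) (br₂ y.2 z.2 + θ y.1 z.2 - θ z.1 y.2) - θ (br₁ y.1 z.1) (β x.2)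
      + (br₂ (β y.2) (br₂ z.2 x.2 + θ z.1 x.2 - θ x.1 z.2)
        + θ (α y.1) (br₂ z.2 x.2 + θ z.1 x.2 - θ x.1 z.2) - θ (br₁ z.1 x.1) (β y.2))
      + (br₂ (β z.2) (br₂ x.2 y.2 + θ x.1 y.2 - θ y.1 x.2)
        + θ (α z.1) (br₂ x.2 y.2 + θ x.1 y.2 - θ y.1 x.2) - θ (br₁ x.1 y.1) (β z.2)) = 0
    simp only [b2_sub_right, b2_add_right, θ_sub_right, θ_add_right, θ_der, rep_br]
    rw [
      hM.br_skew (θ y.1 z.2) (β x.2), hM.br_skew (θ z.1 x.2) (β y.2),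
      hM.br_skew (θ x.1 y.2) (β z.2)]
    rw [show br₂ (β x.2) (br₂ y.2 z.2) = -(br₂ (β y.2) (br₂ z.2 x.2) + br₂ (β z.2) (br₂ x.2 y.2))
      from by rw [eq_neg_iff_add_eq_zero, ← jac]; abel]
    abel
  · intro a x
    refine Prod.ext (hL.α_smulA _ _) ?_
    show β (a • x.2) = φ a • β x.2
    exact hM.α_smulA _ _
  · intro x y a; exact hL.ρ_add_left _ _ _
  · intro r x a; exact hL.ρ_smul_left _ _ _
  · intro x a b; exact hL.ρ_add_right _ _ _
  · intro x r a; exact hL.ρ_smul_right _ _ _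
  · intro x a b; exact hL.ρ_der _ _ _
  · intro a x b
    show ρ (a • x.1) b = _
    exact hL.ρ_smulA _ _ _
  · intro x a; exact hL.rep_α _ _
  · intro x y a; exact hL.rep_br _ _ _
  · intro x y a
    refine Prod.ext (hL.hom_leibniz _ _ _) ?_
    show br₂ x.2 (a • y.2) + θ x.1 (a • y.2) - θ (a • y.1) x.2 = _
    rw [hM.hom_leibniz, θ_smulA_right, θ_smulA_left, zero_smul, add_zero]
    show _ = φ a • (br₂ x.2 y.2 + θ x.1 y.2 - θ y.1 x.2) + ρ x.1 a • β y.2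
    rw [smul_sub, smul_add]; abel
end
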